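/- arXiv:2506.02422 — 2 statements merged into one kernel-verified Lean document; each statement's English description precedes it below -/
import Mathlib

section
/- Let 0 < μ < 2 and ε ∈ [1 − μ²/4, 1). Define λ(η) = (1 − μ/2)⁻¹·((1 − ε)/η + η − μ), and set η₁ = 1 − √ε, η₂ = (μ − √(μ² − 4(1 − ε)))/2, η₃ = (μ + √(μ² − 4(1 − ε)))/2. Then η₁ < η₂ ≤ η₃, and for every η ∈ (0, 1): 0 < λ(η) < 2 if and only if (η₁ < η < η₂) or (η₃ < η). Moreover, η₃ < 1 if and only if ε < 2 − μ. -/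
set_option maxHeartbeats 1000000 in
/-- Feasible-set characterization (36)–(37): for `μ ∈ (0,2)`, `ε ∈ [1 − μ²/4, 1)`, and
`λ(η) = (1 − μ/2)⁻¹·((1 − ε)/η + η − μ)`, with `η₁ = 1 − √ε`,
`η₂ = (μ − √(μ² − 4(1 − ε)))/2`, `η₃ = (μ + √(μ² − 4(1 − ε)))/2`: `η₁ < η₂ ≤ η₃`; for
`η ∈ (0,1)`, `0 < λ(η) < 2` iff `η₁ < η < η₂` or `η₃ < η`; and `η₃ < 1` iff `ε < 2 − μ`. -/
theorem stmt13 (μ ε : ℝ) (hμ0 : 0 < μ) (hμ2 : μ < 2)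
    (hε1 : 1 - μ ^ 2 / 4 ≤ ε) (hε2 : ε < 1)
    (lam : ℝ → ℝ) (hlam : ∀ η, lam η = (1 - μ / 2)⁻¹ * ((1 - ε) / η + η - μ))
    (η₁ η₂ η₃ : ℝ)
    (h1 : η₁ = 1 - Real.sqrt ε)
    (h2 : η₂ = (μ - Real.sqrt (μ ^ 2 - 4 * (1 - ε))) / 2)
    (h3 : η₃ = (μ + Real.sqrt (μ ^ 2 - 4 * (1 - ε))) / 2) :
    η₁ < η₂ ∧ η₂ ≤ η₃ ∧
      (∀ η : ℝ, 0 < η → η < 1 →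
        ((0 < lam η ∧ lam η < 2) ↔ ((η₁ < η ∧ η < η₂) ∨ η₃ < η))) ∧
      (η₃ < 1 ↔ ε < 2 - μ) := by
  set s := Real.sqrt (μ ^ 2 - 4 * (1 - ε)) with hs
  set t := Real.sqrt ε with ht
  have hε0 : 0 ≤ ε := by nlinarith
  have hs2 : s ^ 2 = μ ^ 2 - 4 * (1 - ε) := Real.sq_sqrt (by nlinarith)
  have hs0 : 0 ≤ s := Real.sqrt_nonneg _
  have ht2 : t ^ 2 = ε := Real.sq_sqrt hε0
  have ht0 : 0 ≤ t := Real.sqrt_nonneg _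
  have ht1 : t < 1 := by nlinarith
  have hc : 0 < 1 - μ / 2 := by linarith
  -- 2t > 2 - μ
  have h2t : 2 - μ < 2 * t := by nlinarith [sq_nonneg (2 * t - (2 - μ))]
  have hη12 : η₁ < η₂ := by
    rw [h1, h2]
    nlinarith [sq_nonneg (s - (μ - 2 + 2 * t)), mul_pos (sub_pos.mpr hμ2) (sub_pos.mpr ht1)]
  have hη23 : η₂ ≤ η₃ := by rw [h2, h3]; linarith
  have hfac : ∀ η : ℝ, η ^ 2 - μ * η + (1 - ε) = (η - η₂) * (η - η₃) := by
    intro η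
    rw [h2, h3]
    linear_combination (1 / 4 : ℝ) * hs2
  refine ⟨hη12, hη23, ?_, ?_⟩
  · intro η hη0 hη1
    have hpos : 0 < η * (1 - μ / 2) := mul_pos hη0 hc
    have hηne : η ≠ 0 := ne_of_gt hη0
    have hcne : (1 - μ / 2) ≠ 0 := ne_of_gt hc
    have hq : lam η * (η * (1 - μ / 2)) = η ^ 2 - μ * η + (1 - ε) := by
      have e1 : (1 - μ / 2)⁻¹ * (1 - μ / 2) = 1 := inv_mul_cancel₀ hcne
      have e2 : (1 - ε) / η * η = 1 - ε := div_mul_cancel₀ _ hηne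
      have e3 : lam η * (η * (1 - μ / 2)) =
          ((1 - μ / 2)⁻¹ * (1 - μ / 2)) * ((1 - ε) / η * η + (η - μ) * η) := by
        rw [hlam]; ring
      rw [e3, e1, e2, one_mul]; ring
    have hA : 0 < lam η ↔ (η < η₂ ∨ η₃ < η) := by
      constructor
      · intro h
        have hv : 0 < (η - η₂) * (η - η₃) := by
          rw [← hfac η, ← hq]
          exact mul_pos h hpos
        by_contra hcon
        push_neg at hcon
        nlinarith [mul_nonneg (sub_nonneg.mpr hcon.1) (sub_nonneg.mpr hcon.2)]
      · intro h
        have hv : 0 < lam η * (η * (1 - μ / 2)) := by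
          rw [hq, hfac η]
          rcases h with h | h
          · exact mul_pos_of_neg_of_neg (by linarith) (by linarith)
          · exact mul_pos (by linarith) (by linarith)
        rcases mul_pos_iff.mp hv with ⟨h', _⟩ | ⟨_, h'⟩
        · exact h'
        · linarith
    have hB : lam η < 2 ↔ η₁ < η := by
      rw [h1]
      constructor
      · intro h
        have : lam η * (η * (1 - μ / 2)) < 2 * (η * (1 - μ / 2)) := by
          exact mul_lt_mul_of_pos_right h hpos
        rw [hq] at this
        have h4 : (1 - η) ^ 2 < t ^ 2 := by rw [ht2]; nlinarith
        have h5 : 1 - η < t := lt_of_pow_lt_pow_left₀ 2 ht0 h4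
        linarith
      · intro h
        have key : lam η * (η * (1 - μ / 2)) < 2 * (η * (1 - μ / 2)) := by
          rw [hq]
          have h4 : (1 - η) ^ 2 < t ^ 2 :=
            pow_lt_pow_left₀ (by linarith) (by linarith) (by norm_num)
          nlinarith
        exact lt_of_mul_lt_mul_right key (le_of_lt hpos)
    constructor
    · rintro ⟨ha, hb⟩
      rcases hA.mp ha with h | h
      · exact Or.inl ⟨hB.mp hb, h⟩
      · exact Or.inr h
    · rintro (⟨ha, hb⟩ | h)
      · exact ⟨hA.mpr (Or.inl hb), hB.mpr ha⟩
      · exact ⟨hA.mpr (Or.inr h), hB.mpr (by linarith)⟩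
  · rw [h3]
    have hsl : s < 2 - μ ↔ μ ^ 2 - 4 * (1 - ε) < (2 - μ) ^ 2 :=
      Real.sqrt_lt' (by linarith)
    constructor
    · intro h
      have h' := hsl.mp (by linarith)
      nlinarith
    · intro h
      have h' : μ ^ 2 - 4 * (1 - ε) < (2 - μ) ^ 2 := by nlinarith
      linarith [hsl.mpr h']
end

section
/- Let 0 < μ < 2, ε ∈ [1 − μ²/4, 1), G₀ > 0, M ≥ 0, K > 0. Define λ(η) = (1 − μ/2)⁻¹·((1 − ε)/η + η − μ), G(λ) = ((1 − λ/2)·G₀ + λ·(G₀/μ + M))², Ψ(η) = (η² + 1)·λ(η)² + η³/λ(η), and Φ(η) = (1 + λ(η)³)·η²·G(λ(η)) + K·Ψ(η). Set η₁ = 1 − √ε and η₂ = (μ − √(μ² − 4(1 − ε)))/2. Then Φ is convex on the open interval (η₁, η₂). -/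
/-- The weighting coefficient `λ(η)` obtained from the consistency constraint. -/
noncomputable def lamFn (μ ε η : ℝ) : ℝ :=
  (1 - μ / 2)⁻¹ * ((1 - ε) / η + η - μ)

/-- `G(λ) = ((1 − λ/2)G₀ + λ(G₀/μ + M))²`. -/
noncomputable def GFn (G₀ M μ lam : ℝ) : ℝ :=
  ((1 - lam / 2) * G₀ + lam * (G₀ / μ + M)) ^ 2

/-- `Ψ(η) = (η² + 1)λ(η)² + η³/λ(η)`. -/
noncomputable def PsiFn (μ ε η : ℝ) : ℝ :=
  (η ^ 2 + 1) * (lamFn μ ε η) ^ 2 + η ^ 3 / lamFn μ ε η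

/-- The convergence-bias objective `Φ(η) = (1 + λ(η)³)·η²·G(λ(η)) + K·Ψ(η)`. -/
noncomputable def PhiFn (μ ε G₀ M K η : ℝ) : ℝ :=
  (1 + (lamFn μ ε η) ^ 3) * η ^ 2 * GFn G₀ M μ (lamFn μ ε η) + K * PsiFn μ ε η

section Aux

lemma convexOn_of_deriv_pair {a b : ℝ} {g g1 g2 : ℝ → ℝ}
    (h1 : ∀ x ∈ Set.Ioo a b, HasDerivAt g (g1 x) x)
    (h2 : ∀ x ∈ Set.Ioo a b, HasDerivAt g1 (g2 x) x)
    (h0 : ∀ x ∈ Set.Ioo a b, 0 ≤ g2 x) : ConvexOn ℝ (Set.Ioo a b) g := by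
  apply convexOn_of_hasDerivWithinAt2_nonneg (convex_Ioo a b)
      (fun x hx => (h1 x hx).continuousAt.continuousWithinAt)
  · intro x hx
    rw [interior_Ioo] at hx
    exact (h1 x hx).hasDerivWithinAt
  · intro x hx
    rw [interior_Ioo] at hx
    exact (h2 x hx).hasDerivWithinAt
  · intro x hx
    rw [interior_Ioo] at hx
    exact h0 x hx

lemma convexOn_congrOn {s : Set ℝ} {f g : ℝ → ℝ} (hg : ConvexOn ℝ s g)
    (he : ∀ x ∈ s, f x = g x) : ConvexOn ℝ s f := by
  refine ⟨hg.1, fun x hx y hy a b ha hb hab => ?_⟩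
  rw [he x hx, he y hy, he _ (hg.1 hx hy ha hb hab)]
  exact hg.2 hx hy ha hb hab

lemma hdF (μ s x : ℝ) : HasDerivAt (fun h : ℝ => h^2 - μ*h + s) (2*x - μ) x := by
  have := ((hasDerivAt_pow 2 x).sub ((hasDerivAt_id x).const_mul μ)).add_const s
  simpa using this

lemma hdW (μ x : ℝ) : HasDerivAt (fun h : ℝ => 2*h - μ) 2 x := by
  simpa using ((hasDerivAt_id x).const_mul 2).sub_const μ

variable {μ s η₁ η₂ : ℝ}

/-- facts available at points of the interval -/
def Pts (μ s η₁ η₂ : ℝ) : Prop :=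
  ∀ x ∈ Set.Ioo η₁ η₂, 0 < x ∧ 2*x < μ ∧ 0 < x^2 - μ*x + s ∧ x^2 ≤ s ∧
    s*(x^2 - μ*x + s) ≤ (s - x^2)^2

lemma conv_p1 (hpt : Pts μ s η₁ η₂) {a g : ℝ} (ha : 0 ≤ a) (hg : 0 ≤ g) :
    ConvexOn ℝ (Set.Ioo η₁ η₂) (fun h : ℝ => (a*h + g*(h^2 - μ*h + s))^2) := by
  apply convexOn_of_deriv_pair
    (g1 := fun x => 2*(a*x + g*(x^2 - μ*x + s))*(a + g*(2*x - μ)))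
    (g2 := fun x => 2*(a + g*(2*x - μ))^2 + 4*g*(a*x + g*(x^2 - μ*x + s)))
  · intro x _
    have h := (((hasDerivAt_id x).const_mul a).add ((hdF μ s x).const_mul g)).pow 2
    refine h.congr_deriv ?_
    simp only [id_eq, Pi.add_apply, Pi.sub_apply, Pi.mul_apply, Pi.pow_apply, Pi.div_apply]
    push_cast
    ring
  · intro x _
    have h := ((((hasDerivAt_id x).const_mul a).add ((hdF μ s x).const_mul g)).const_mul 2).mul
      (((hdW μ x).const_mul g).const_add a)
    refine h.congr_deriv ?_
    simp only [id_eq, Pi.add_apply, Pi.sub_apply, Pi.mul_apply, Pi.pow_apply, Pi.div_apply]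
    push_cast
    ring
  · intro x hx
    obtain ⟨hx0, -, hF, -, -⟩ := hpt x hx
    have : 0 ≤ a*x + g*(x^2 - μ*x + s) :=
      add_nonneg (mul_nonneg ha hx0.le) (mul_nonneg hg hF.le)
    nlinarith [sq_nonneg (a + g*(2*x - μ))]

lemma conv_p2 (hpt : Pts μ s η₁ η₂) :
    ConvexOn ℝ (Set.Ioo η₁ η₂) (fun h : ℝ => (h^2 - μ*h + s)^2) := by
  apply convexOn_of_deriv_pair
    (g1 := fun x => 2*(x^2 - μ*x + s)*(2*x - μ))
    (g2 := fun x => 2*(2*x - μ)^2 + 4*(x^2 - μ*x + s))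
  · intro x _
    have h := (hdF μ s x).pow 2
    refine h.congr_deriv ?_
    push_cast [Pi.add_apply, Pi.sub_apply, Pi.mul_apply, Pi.pow_apply, Pi.div_apply]
    ring
  · intro x _
    have h := (((hdF μ s x).const_mul 2).mul (hdW μ x))
    refine h.congr_deriv ?_
    ring
  · intro x hx
    obtain ⟨-, -, hF, -, -⟩ := hpt x hx
    nlinarith [sq_nonneg (2*x - μ)]

lemma conv_p3 (hpt : Pts μ s η₁ η₂) :
    ConvexOn ℝ (Set.Ioo η₁ η₂) (fun h : ℝ => (h^2 - μ*h + s)^3 / h) := by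
  apply convexOn_of_deriv_pair
    (g1 := fun x => (3*(x^2 - μ*x + s)^2*(2*x - μ)*x - (x^2 - μ*x + s)^3) / x^2)
    (g2 := fun x => ((6*(x^2-μ*x+s)*(2*x-μ)^2*x + 6*(x^2-μ*x+s)^2*x)*x^2
        - (3*(x^2-μ*x+s)^2*(2*x-μ)*x - (x^2-μ*x+s)^3)*(2*x)) / x^4)
  · intro x hx
    have hx0 := (hpt x hx).1
    have h := ((hdF μ s x).pow 3).div (hasDerivAt_id x) hx0.ne'
    refine h.congr_deriv ?_
    simp only [id_eq, Pi.add_apply, Pi.sub_apply, Pi.mul_apply, Pi.pow_apply, Pi.div_apply]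
    push_cast
    ring
  · intro x hx
    have hx0 := (hpt x hx).1
    have hN : HasDerivAt (fun h : ℝ => 3*(h^2 - μ*h + s)^2*(2*h - μ)*h - (h^2 - μ*h + s)^3)
        (6*(x^2-μ*x+s)*(2*x-μ)^2*x + 6*(x^2-μ*x+s)^2*x) x := by
      have h1 := ((((hdF μ s x).pow 2).const_mul 3).mul (hdW μ x)).mul (hasDerivAt_id x)
      have := h1.sub ((hdF μ s x).pow 3)
      refine this.congr_deriv ?_
      simp only [id_eq, Pi.add_apply, Pi.sub_apply, Pi.mul_apply, Pi.pow_apply, Pi.div_apply]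
      push_cast
      ring
    have := hN.div (hasDerivAt_pow 2 x) (pow_ne_zero 2 hx0.ne')
    refine this.congr_deriv ?_
    push_cast [Pi.add_apply, Pi.sub_apply, Pi.mul_apply, Pi.pow_apply, Pi.div_apply]
    ring
  · intro x hx
    obtain ⟨hx0, -, hF, hx2s, -⟩ := hpt x hx
    apply div_nonneg _ (by positivity)
    have hid : (6*(x^2-μ*x+s)*(2*x-μ)^2*x + 6*(x^2-μ*x+s)^2*x)*x^2
        - (3*(x^2-μ*x+s)^2*(2*x-μ)*x - (x^2-μ*x+s)^3)*(2*x)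
        = 2*x*(x^2-μ*x+s) * (((x^2-μ*x+s) + 3/2*(x^2-s))^2 + 3/4*(x^2-s)^2
            + 3*(x^2-μ*x+s)*x^2) := by ring
    rw [hid]
    apply mul_nonneg (by positivity)
    have := mul_nonneg hF.le (sq_nonneg x)
    nlinarith [sq_nonneg ((x^2-μ*x+s) + 3/2*(x^2-s)), sq_nonneg (x^2-s)]

lemma conv_p4 (hpt : Pts μ s η₁ η₂) :
    ConvexOn ℝ (Set.Ioo η₁ η₂) (fun h : ℝ => (h^2 - μ*h + s)^4 / h^2) := by
  apply convexOn_of_deriv_pair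
    (g1 := fun x => (4*(x^2 - μ*x + s)^3*(2*x - μ)*x^2 - 2*(x^2 - μ*x + s)^4*x) / x^4)
    (g2 := fun x => ((12*(x^2-μ*x+s)^2*(2*x-μ)^2*x^2 + 8*(x^2-μ*x+s)^3*x^2 - 2*(x^2-μ*x+s)^4)*x^4
        - (4*(x^2 - μ*x + s)^3*(2*x - μ)*x^2 - 2*(x^2 - μ*x + s)^4*x)*(4*x^3)) / x^8)
  · intro x hx
    have hx0 := (hpt x hx).1
    have h := ((hdF μ s x).pow 4).div (hasDerivAt_pow 2 x) (pow_ne_zero 2 hx0.ne')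
    refine h.congr_deriv ?_
    push_cast [Pi.add_apply, Pi.sub_apply, Pi.mul_apply, Pi.pow_apply, Pi.div_apply]
    ring
  · intro x hx
    have hx0 := (hpt x hx).1
    have hN : HasDerivAt (fun h : ℝ => 4*(h^2 - μ*h + s)^3*(2*h - μ)*h^2 - 2*(h^2 - μ*h + s)^4*h)
        (12*(x^2-μ*x+s)^2*(2*x-μ)^2*x^2 + 8*(x^2-μ*x+s)^3*x^2 - 2*(x^2-μ*x+s)^4) x := by
      have h1 := ((((hdF μ s x).pow 3).const_mul 4).mul (hdW μ x)).mul (hasDerivAt_pow 2 x)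
      have h2 := (((hdF μ s x).pow 4).const_mul 2).mul (hasDerivAt_id x)
      have := h1.sub h2
      refine this.congr_deriv ?_
      simp only [id_eq, Pi.add_apply, Pi.sub_apply, Pi.mul_apply, Pi.pow_apply, Pi.div_apply]
      push_cast
      ring
    have := hN.div (hasDerivAt_pow 4 x) (pow_ne_zero 4 hx0.ne')
    refine this.congr_deriv ?_
    push_cast [Pi.add_apply, Pi.sub_apply, Pi.mul_apply, Pi.pow_apply, Pi.div_apply]
    ring
  · intro x hx
    obtain ⟨hx0, -, hF, hx2s, -⟩ := hpt x hx
    apply div_nonneg _ (by positivity)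
    have hid : (12*(x^2-μ*x+s)^2*(2*x-μ)^2*x^2 + 8*(x^2-μ*x+s)^3*x^2 - 2*(x^2-μ*x+s)^4)*x^4
        - (4*(x^2 - μ*x + s)^3*(2*x - μ)*x^2 - 2*(x^2 - μ*x + s)^4*x)*(4*x^3)
        = 2*(x^2-μ*x+s)^2*x^4 * (((x^2-μ*x+s) + 2*(x^2-s))^2 + 2*(x^2-s)^2
            + 4*(x^2-μ*x+s)*x^2) := by ring
    rw [hid]
    apply mul_nonneg (by positivity)
    have := mul_nonneg hF.le (sq_nonneg x)
    nlinarith [sq_nonneg ((x^2-μ*x+s) + 2*(x^2-s)), sq_nonneg (x^2-s)]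

lemma conv_p5 (hpt : Pts μ s η₁ η₂) :
    ConvexOn ℝ (Set.Ioo η₁ η₂) (fun h : ℝ => (h^2 - μ*h + s)^5 / h^3) := by
  apply convexOn_of_deriv_pair
    (g1 := fun x => (5*(x^2 - μ*x + s)^4*(2*x - μ)*x^3 - 3*(x^2 - μ*x + s)^5*x^2) / x^6)
    (g2 := fun x => ((20*(x^2-μ*x+s)^3*(2*x-μ)^2*x^3 + 10*(x^2-μ*x+s)^4*x^3 - 6*(x^2-μ*x+s)^5*x)*x^6
        - (5*(x^2 - μ*x + s)^4*(2*x - μ)*x^3 - 3*(x^2 - μ*x + s)^5*x^2)*(6*x^5)) / x^12)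
  · intro x hx
    have hx0 := (hpt x hx).1
    have h := ((hdF μ s x).pow 5).div (hasDerivAt_pow 3 x) (pow_ne_zero 3 hx0.ne')
    refine h.congr_deriv ?_
    push_cast [Pi.add_apply, Pi.sub_apply, Pi.mul_apply, Pi.pow_apply, Pi.div_apply]
    ring
  · intro x hx
    have hx0 := (hpt x hx).1
    have hN : HasDerivAt (fun h : ℝ => 5*(h^2 - μ*h + s)^4*(2*h - μ)*h^3 - 3*(h^2 - μ*h + s)^5*h^2)
        (20*(x^2-μ*x+s)^3*(2*x-μ)^2*x^3 + 10*(x^2-μ*x+s)^4*x^3 - 6*(x^2-μ*x+s)^5*x) x := by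
      have h1 := ((((hdF μ s x).pow 4).const_mul 5).mul (hdW μ x)).mul (hasDerivAt_pow 3 x)
      have h2 := (((hdF μ s x).pow 5).const_mul 3).mul (hasDerivAt_pow 2 x)
      have := h1.sub h2
      refine this.congr_deriv ?_
      push_cast [Pi.add_apply, Pi.sub_apply, Pi.mul_apply, Pi.pow_apply, Pi.div_apply]
      ring
    have := hN.div (hasDerivAt_pow 6 x) (pow_ne_zero 6 hx0.ne')
    refine this.congr_deriv ?_
    push_cast [Pi.add_apply, Pi.sub_apply, Pi.mul_apply, Pi.pow_apply, Pi.div_apply]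
    ring
  · intro x hx
    obtain ⟨hx0, -, hF, hx2s, -⟩ := hpt x hx
    apply div_nonneg _ (by positivity)
    have hid : (20*(x^2-μ*x+s)^3*(2*x-μ)^2*x^3 + 10*(x^2-μ*x+s)^4*x^3 - 6*(x^2-μ*x+s)^5*x)*x^6
        - (5*(x^2 - μ*x + s)^4*(2*x - μ)*x^3 - 3*(x^2 - μ*x + s)^5*x^2)*(6*x^5)
        = 2*(x^2-μ*x+s)^3*x^7 * (((x^2-μ*x+s) + 5/2*(x^2-s))^2 + 15/4*(x^2-s)^2
            + 5*(x^2-μ*x+s)*x^2) := by ring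
    rw [hid]
    apply mul_nonneg (by positivity)
    have := mul_nonneg hF.le (sq_nonneg x)
    nlinarith [sq_nonneg ((x^2-μ*x+s) + 5/2*(x^2-s)), sq_nonneg (x^2-s)]

lemma conv_p6 (hpt : Pts μ s η₁ η₂) :
    ConvexOn ℝ (Set.Ioo η₁ η₂) (fun h : ℝ => (h^2 - μ*h + s)^2 / h^2) := by
  apply convexOn_of_deriv_pair
    (g1 := fun x => (2*(x^2 - μ*x + s)*(2*x - μ)*x^2 - 2*(x^2 - μ*x + s)^2*x) / x^4)
    (g2 := fun x => ((2*(2*x-μ)^2*x^2 + 4*(x^2-μ*x+s)*x^2 - 2*(x^2-μ*x+s)^2)*x^4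
        - (2*(x^2 - μ*x + s)*(2*x - μ)*x^2 - 2*(x^2 - μ*x + s)^2*x)*(4*x^3)) / x^8)
  · intro x hx
    have hx0 := (hpt x hx).1
    have h := ((hdF μ s x).pow 2).div (hasDerivAt_pow 2 x) (pow_ne_zero 2 hx0.ne')
    refine h.congr_deriv ?_
    push_cast [Pi.add_apply, Pi.sub_apply, Pi.mul_apply, Pi.pow_apply, Pi.div_apply]
    ring
  · intro x hx
    have hx0 := (hpt x hx).1
    have hN : HasDerivAt (fun h : ℝ => 2*(h^2 - μ*h + s)*(2*h - μ)*h^2 - 2*(h^2 - μ*h + s)^2*h)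
        (2*(2*x-μ)^2*x^2 + 4*(x^2-μ*x+s)*x^2 - 2*(x^2-μ*x+s)^2) x := by
      have h1 := (((hdF μ s x).const_mul 2).mul (hdW μ x)).mul (hasDerivAt_pow 2 x)
      have h2 := (((hdF μ s x).pow 2).const_mul 2).mul (hasDerivAt_id x)
      have := h1.sub h2
      refine this.congr_deriv ?_
      simp only [id_eq, Pi.add_apply, Pi.sub_apply, Pi.mul_apply, Pi.pow_apply, Pi.div_apply]
      push_cast
      ring
    have := hN.div (hasDerivAt_pow 4 x) (pow_ne_zero 4 hx0.ne')
    refine this.congr_deriv ?_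
    push_cast [Pi.add_apply, Pi.sub_apply, Pi.mul_apply, Pi.pow_apply, Pi.div_apply]
    ring
  · intro x hx
    obtain ⟨hx0, -, hF, hx2s, -⟩ := hpt x hx
    apply div_nonneg _ (by positivity)
    have hid : (2*(2*x-μ)^2*x^2 + 4*(x^2-μ*x+s)*x^2 - 2*(x^2-μ*x+s)^2)*x^4
        - (2*(x^2 - μ*x + s)*(2*x - μ)*x^2 - 2*(x^2 - μ*x + s)^2*x)*(4*x^3)
        = 2*x^4 * ((x^2-s)^2 + 2*s*(x^2-μ*x+s)) := by ring
    rw [hid]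
    have hs0 : 0 ≤ s := le_trans (sq_nonneg x) hx2s
    apply mul_nonneg (by positivity)
    nlinarith [sq_nonneg (x^2-s), mul_nonneg hs0 hF.le]

lemma conv_p7 (hpt : Pts μ s η₁ η₂) :
    ConvexOn ℝ (Set.Ioo η₁ η₂) (fun h : ℝ => h^4 / (h^2 - μ*h + s)) := by
  apply convexOn_of_deriv_pair
    (g1 := fun x => (4*x^3*(x^2 - μ*x + s) - x^4*(2*x - μ)) / (x^2 - μ*x + s)^2)
    (g2 := fun x => ((12*x^2*(x^2-μ*x+s) - 2*x^4)*(x^2-μ*x+s)^2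
        - (4*x^3*(x^2 - μ*x + s) - x^4*(2*x - μ))*(2*(x^2-μ*x+s)*(2*x-μ))) / (x^2-μ*x+s)^4)
  · intro x hx
    have hF := (hpt x hx).2.2.1
    have h := (hasDerivAt_pow 4 x).div (hdF μ s x) hF.ne'
    refine h.congr_deriv (by norm_num)
  · intro x hx
    have hF := (hpt x hx).2.2.1
    have hN : HasDerivAt (fun h : ℝ => 4*h^3*(h^2 - μ*h + s) - h^4*(2*h - μ))
        (12*x^2*(x^2-μ*x+s) - 2*x^4) x := by
      have h1 := (((hasDerivAt_pow 3 x).const_mul 4).mul (hdF μ s x))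
      have h2 := ((hasDerivAt_pow 4 x).mul (hdW μ x))
      have := h1.sub h2
      refine this.congr_deriv ?_
      push_cast [Pi.add_apply, Pi.sub_apply, Pi.mul_apply, Pi.pow_apply, Pi.div_apply]
      ring
    have hD : HasDerivAt (fun h : ℝ => (h^2 - μ*h + s)^2) (2*(x^2-μ*x+s)*(2*x-μ)) x := by
      have := (hdF μ s x).pow 2
      refine this.congr_deriv ?_
      push_cast [Pi.add_apply, Pi.sub_apply, Pi.mul_apply, Pi.pow_apply, Pi.div_apply]
      ring
    have := hN.div hD (pow_ne_zero 2 hF.ne')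
    refine this.congr_deriv ?_
    ring
  · intro x hx
    obtain ⟨hx0, -, hF, hx2s, hkey⟩ := hpt x hx
    apply div_nonneg _ (by positivity)
    have hid : (12*x^2*(x^2-μ*x+s) - 2*x^4)*(x^2-μ*x+s)^2
        - (4*x^3*(x^2 - μ*x + s) - x^4*(2*x - μ))*(2*(x^2-μ*x+s)*(2*x-μ))
        = 2*(x^2-μ*x+s)*x^2 * (3*(x^2-μ*x+s)^2 + 3*(x^2-μ*x+s)*(s-x^2)
            + ((s-x^2)^2 - s*(x^2-μ*x+s))) := by ring
    rw [hid]
    apply mul_nonneg (by positivity)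
    have h1 : 0 ≤ 3*(x^2-μ*x+s)*(s-x^2) :=
      mul_nonneg (by positivity) (by linarith)
    nlinarith [sq_nonneg (x^2-μ*x+s)]

end Aux


set_option maxHeartbeats 2000000 in
/-- Theorem 5, Ω₀ part: `Φ` is convex on the interval `(η₁, η₂)` with `η₁ = 1 − √ε` and
`η₂ = (μ − √(μ² − 4(1 − ε)))/2`, for `μ ∈ (0,2)`, `ε ∈ [1 − μ²/4, 1)`, `G₀ > 0`, `M ≥ 0`,
`K > 0`. -/
theorem stmt14 (μ ε G₀ M K : ℝ) (hμ0 : 0 < μ) (hμ2 : μ < 2)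
    (hε1 : 1 - μ ^ 2 / 4 ≤ ε) (hε2 : ε < 1) (hG : 0 < G₀) (hM : 0 ≤ M) (hK : 0 < K) :
    ConvexOn ℝ
      (Set.Ioo (1 - Real.sqrt ε) ((μ - Real.sqrt (μ ^ 2 - 4 * (1 - ε))) / 2))
      (PhiFn μ ε G₀ M K) := by
  have hμ2' : (0:ℝ) < 1 - μ/2 := by linarith
  have hc : 0 < (1 - μ/2)⁻¹ := inv_pos.2 hμ2'
  have hb : 0 < G₀/μ + M - G₀/2 := by
    have : G₀/2 < G₀/μ := by
      rw [div_lt_div_iff₀ two_pos hμ0]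
      nlinarith
    linarith
  have hpt : Pts μ (1-ε) (1 - Real.sqrt ε) ((μ - Real.sqrt (μ^2 - 4*(1-ε)))/2) := by
    intro x hx
    obtain ⟨h1, h2⟩ := hx
    have hq0 : 0 ≤ μ^2 - 4*(1-ε) := by linarith
    have hqs := Real.sq_sqrt hq0
    have hqn := Real.sqrt_nonneg (μ^2 - 4*(1-ε))
    have h2x : 2*x < μ := by linarith
    have hq_lt : Real.sqrt (μ^2-4*(1-ε)) < μ - 2*x := by linarith
    have hF : 0 < x^2 - μ*x + (1-ε) := by
      nlinarith [mul_self_lt_mul_self hqn hq_lt, hqs]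
    have hε0 : 0 ≤ ε := by nlinarith
    have hxe : Real.sqrt ε < 1 := by
      rw [show (1:ℝ) = Real.sqrt 1 by simp]
      exact Real.sqrt_lt_sqrt hε0 hε2
    have hx0 : 0 < x := by linarith
    have hx2s : x^2 ≤ (1-ε) := by nlinarith
    refine ⟨hx0, h2x, hF, hx2s, ?_⟩
    nlinarith [mul_nonneg (mul_nonneg hx0.le (by linarith : (0:ℝ) ≤ μ - 2*x)) hF.le,
      mul_nonneg (sq_nonneg x) (sq_nonneg (x - μ/2)),
      mul_nonneg (sq_nonneg x) (by linarith : (0:ℝ) ≤ μ^2/4 - (1-ε))]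
  have hg0 : (0:ℝ) ≤ (G₀/μ + M - G₀/2)*(1-μ/2)⁻¹ := (mul_pos hb hc).le
  have hA3 : (0:ℝ) ≤ G₀^2*((1-μ/2)⁻¹)^3 := by positivity
  have hA4 : (0:ℝ) ≤ 2*G₀*(G₀/μ + M - G₀/2)*((1-μ/2)⁻¹)^4 := by positivity
  have hA5 : (0:ℝ) ≤ (G₀/μ + M - G₀/2)^2*((1-μ/2)⁻¹)^5 := by positivity
  have hK2 : (0:ℝ) ≤ K*((1-μ/2)⁻¹)^2 := by positivity
  have hKC : (0:ℝ) ≤ K*(1-μ/2) := by positivity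
  have hconv := (conv_p1 hpt (a := G₀) (g := (G₀/μ + M - G₀/2)*(1-μ/2)⁻¹) hG.le hg0).add
    (((conv_p3 hpt).smul hA3).add
    (((conv_p4 hpt).smul hA4).add
    (((conv_p5 hpt).smul hA5).add
    (((conv_p2 hpt).smul hK2).add
    (((conv_p6 hpt).smul hK2).add
    ((conv_p7 hpt).smul hKC))))))
  apply convexOn_congrOn hconv
  intro x hx
  obtain ⟨hx0, h2x, hF, hx2s, -⟩ := hpt x hx
  have hne1 : (1:ℝ) - μ/2 ≠ 0 := ne_of_gt hμ2'
  have hxne : x ≠ 0 := hx0.ne'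
  have hFne : x^2 - μ*x + (1-ε) ≠ 0 := hF.ne'
  have hl : lamFn μ ε x = (1 - μ/2)⁻¹ * ((x^2 - μ*x + (1-ε)) / x) := by
    unfold lamFn
    rw [show (1 - ε)/x + x - μ = (x^2 - μ*x + (1-ε))/x by field_simp; ring]
  simp only [Pi.add_apply, PhiFn, PsiFn, GFn, hl, smul_eq_mul]
  obtain ⟨u, hu0, hrw⟩ : ∃ u:ℝ, u ≠ 0 ∧ x^2 - μ*x + (1-ε) = u := ⟨_, hFne, rfl⟩
  rw [hrw]
  generalize hv : 1 - μ/2 = v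
  have hv0 : v ≠ 0 := hv ▸ hne1
  generalize hB : G₀/μ + M = B
  field_simp
  ring
end
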